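/- For every positive integer k, the cone S₊^{k+1} of (k+1)×(k+1) real symmetric positive semidefinite matrices does not have a (K_1 × ⋯ × K_m)-lift for any positive integer m and closed convex cones K_1, …, K_m satisfying ℓ(K_i) ≤ k+1 for all i ∈ [m]. In particular, S₊^3 has no lift using a finite product of cones each of whose nonempty face chains have length at most 3 (e.g., smooth cones such as second-order cones), and S₊^4 has no lift using a finite product of cones of dimension at most 3. -/

import Mathlib

/-
Lift the rank-one matrices `v_t v_tᵀ`, `v_t = (1, t, …, t^k)`, `t ∈ ℕ`, to points `u_t` of the
product cone, and let `F_i(S)` be the minimal face of `K_i` containing `∑_{s ∈ S} u_s i`. If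
`|S| ≤ k` and `t ∉ S`, then `u_t i ∉ F_i(S)` for some `i`: otherwise `∑_{s ∈ S} u_s - δ u_t` lies
in the lift for small `δ > 0`, but its image `∑_{s ∈ S} v_s v_sᵀ - δ v_t v_tᵀ` is not positive
semidefinite, as some polynomial of degree `≤ k` vanishes on `S` and not at `t`. Colouring each
`(k+1)`-set `T` by the set of such `i` for `S = T \ {max T}`, infinite Ramsey yields a single `i`
and points `t_0, …, t_k` with `u_{t_j} i ∉ F_i({t_0, …, t_{j-1}})`, i.e. a chain of `k + 2`
faces of `K_i`.
-/

/-- A closed convex cone (containing the origin). -/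
def IsClosedConvexCone {E : Type*} [AddCommGroup E] [Module ℝ E] [TopologicalSpace E]
    (K : Set E) : Prop :=
  IsClosed K ∧ Convex ℝ K ∧ (0 : E) ∈ K ∧ ∀ x ∈ K, ∀ t : ℝ, 0 ≤ t → t • x ∈ K

/-- A face of a convex cone. -/
def IsFace {E : Type*} [AddCommGroup E] [Module ℝ E] (K F : Set E) : Prop :=
  F ⊆ K ∧ Convex ℝ F ∧
    ∀ ⦃x⦄, x ∈ K → ∀ ⦃y⦄, y ∈ K → ∀ ⦃α : ℝ⦄, 0 < α → α < 1 →
      α • x + (1 - α) • y ∈ F → x ∈ F ∧ y ∈ F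

/-- `FaceChainBound K m` says every chain of nonempty faces of `K` has length at most `m`,
i.e. `ℓ(K) ≤ m`. -/
def FaceChainBound {E : Type*} [AddCommGroup E] [Module ℝ E] (K : Set E) (m : ℕ) : Prop :=
  ∀ (l : ℕ) (F : Fin l → Set E),
    (∀ i, IsFace K (F i) ∧ (F i).Nonempty) →
    (∀ i j : Fin l, i < j → F i ⊂ F j) → l ≤ m

def IsClosedConvexCone.toPointedCone {E : Type*} [AddCommGroup E] [Module ℝ E]
    [TopologicalSpace E] {K : Set E} (hK : IsClosedConvexCone K) : PointedCone ℝ E where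
  carrier := K
  add_mem' {a b} ha hb := by
    have hmid : (1 / 2 : ℝ) • a + (1 / 2 : ℝ) • b ∈ K :=
      hK.2.1 ha hb (by norm_num) (by norm_num) (by norm_num)
    have h := hK.2.2.2 _ hmid 2 (by norm_num)
    rwa [smul_add, smul_smul, smul_smul, show (2 : ℝ) * (1 / 2) = 1 by norm_num, one_smul,
      one_smul] at h
  zero_mem' := hK.2.2.1
  smul_mem' c _ hx := hK.2.2.2 _ hx c c.2

lemma not_faceChainBound_of_ssubset_succ {E : Type*} [AddCommGroup E] [Module ℝ E] {K : Set E}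
    {n : ℕ} (G : ℕ → Set E) (hG : ∀ j, IsFace K (G j) ∧ (G j).Nonempty) (hmono : Monotone G)
    (hlt : ∀ j < n, G j ⊂ G (j + 1)) : ¬ FaceChainBound K n := by
  intro h
  have := h (n + 1) (fun j => G j) (fun j => hG j) fun a b hab =>
    (hlt a (by omega)).trans_subset (hmono (show (a : ℕ) + 1 ≤ b from hab))
  omega

section MinFace

open Filter Topology

variable {E : Type*} [AddCommGroup E] [Module ℝ E] (C : PointedCone ℝ E)

def minFace (p : E) : Set E := {q | q ∈ C ∧ ∃ δ : ℝ, 0 < δ ∧ p - δ • q ∈ C}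

variable {C}

lemma sub_smul_mem_of_le {p q : E} (hp : p ∈ C) {δ δ' : ℝ} (hδ : 0 < δ) (hle : δ ≤ δ')
    (h : p - δ' • q ∈ C) : p - δ • q ∈ C := by
  have hδ' : 0 < δ' := hδ.trans_le hle
  have key : p - δ • q = (1 - δ / δ') • p + (δ / δ') • (p - δ' • q) := by
    rw [smul_sub, smul_smul, div_mul_cancel₀ _ hδ'.ne']; module
  rw [key]
  exact C.convex hp h (sub_nonneg.2 ((div_le_one hδ').2 hle)) (by positivity) (by ring)

lemma eventually_sub_smul_mem_of_mem_minFace {p q : E} (hp : p ∈ C) (hq : q ∈ minFace C p) :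
    ∀ᶠ δ in 𝓝[>] (0 : ℝ), p - δ • q ∈ C := by
  obtain ⟨-, δ, hδ, hmem⟩ := hq
  filter_upwards [Ioc_mem_nhdsGT hδ] with δ' hδ' using sub_smul_mem_of_le hp hδ'.1 hδ'.2 hmem

lemma self_mem_minFace {p : E} (hp : p ∈ C) : p ∈ minFace C p :=
  ⟨hp, 1, one_pos, by simp⟩

lemma minFace_subset_add {p d : E} (hd : d ∈ C) : minFace C p ⊆ minFace C (p + d) := by
  rintro q ⟨hq, δ, hδ, hmem⟩
  exact ⟨hq, δ, hδ, by simpa [sub_add_eq_add_sub] using C.add_mem hmem hd⟩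

lemma mem_minFace_add {p q : E} (hp : p ∈ C) (hq : q ∈ C) : q ∈ minFace C (q + p) :=
  ⟨hq, 1, one_pos, by simpa using hp⟩

lemma mem_minFace_of_smul_add_smul_mem {p x y : E} (hx : x ∈ C) (hy : y ∈ C) {α β : ℝ}
    (hα : 0 < α) (hβ : 0 ≤ β) (h : α • x + β • y ∈ minFace C p) : x ∈ minFace C p := by
  obtain ⟨-, δ, hδ, hmem⟩ := h
  refine ⟨hx, δ * α, by positivity, ?_⟩
  have key : p - (δ * α) • x = (p - δ • (α • x + β • y)) + (δ * β) • y := by module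
  rw [key]
  exact C.add_mem hmem (C.smul_mem (by positivity) hy)

lemma isFace_minFace {p : E} (hp : p ∈ C) : IsFace C (minFace C p) := by
  refine ⟨fun q hq => hq.1, ?_, fun x hx y hy α hα0 hα1 h => ⟨?_, ?_⟩⟩
  · intro x hx y hy a b ha hb hab
    obtain ⟨δ, hδx, hδy, hδ⟩ := ((eventually_sub_smul_mem_of_mem_minFace hp hx).and
      ((eventually_sub_smul_mem_of_mem_minFace hp hy).and self_mem_nhdsWithin)).exists
    refine ⟨C.convex hx.1 hy.1 ha hb hab, δ, hδ, ?_⟩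
    have key : p - δ • (a • x + b • y) = a • (p - δ • x) + b • (p - δ • y) := by
      nth_rewrite 1 [← one_smul ℝ p, ← hab]; module
    rw [key]
    exact C.convex hδx hδy ha hb hab
  · exact mem_minFace_of_smul_add_smul_mem hx hy hα0 (sub_nonneg.2 hα1.le) h
  · exact mem_minFace_of_smul_add_smul_mem hy hx (sub_pos.2 hα1) hα0.le (by rwa [add_comm])

end MinFace

section Moment

open Matrix Polynomial Finset

variable {R : Type*} [CommRing R] (k : ℕ)

def momentVector (t : R) : Fin (k + 1) → R := fun a => t ^ (a : ℕ)

def momentMatrix (t : R) : Matrix (Fin (k + 1)) (Fin (k + 1)) R :=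
  vecMulVec (momentVector k t) (momentVector k t)

variable {k}

lemma momentVector_dotProduct_coeff {p : R[X]} (hp : p.natDegree < k + 1) (t : R) :
    momentVector k t ⬝ᵥ (fun a => p.coeff a) = p.eval t := by
  rw [eval_eq_sum_range' hp, ← Fin.sum_univ_eq_sum_range]
  simp only [dotProduct, momentVector, mul_comm]

lemma exists_dotProduct_momentVector_eq_zero [IsDomain R] {ι : Type*} (x : ι → R) {S : Finset ι}
    (hS : #S ≤ k) {j : ι} (hj : ∀ i ∈ S, x i ≠ x j) :
    ∃ c : Fin (k + 1) → R,
      (∀ i ∈ S, momentVector k (x i) ⬝ᵥ c = 0) ∧ momentVector k (x j) ⬝ᵥ c ≠ 0 := by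
  set p : R[X] := ∏ i ∈ S, (X - C (x i))
  have hp : p.natDegree < k + 1 := by simp only [p, natDegree_finsetProd_X_sub_C_eq_card]; omega
  refine ⟨fun a => p.coeff a, fun i hi => ?_, ?_⟩ <;> rw [momentVector_dotProduct_coeff hp]
  · rw [eval_prod]; exact prod_eq_zero hi (by simp)
  · simpa [p, eval_prod, prod_ne_zero_iff, sub_ne_zero] using fun i hi => (hj i hi).symm

lemma dotProduct_vecMulVec_self_mulVec (v c : Fin k → R) :
    c ⬝ᵥ (vecMulVec v v *ᵥ c) = (v ⬝ᵥ c) ^ 2 := by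
  rw [vecMulVec_mulVec, op_smul_eq_smul, dotProduct_smul, dotProduct_comm, smul_eq_mul, sq]

lemma posSemidef_momentMatrix (t : ℝ) : (momentMatrix k t).PosSemidef := by
  simpa [momentMatrix] using posSemidef_vecMulVec_self_star (momentVector k t)

lemma not_posSemidef_sum_momentMatrix_sub {ι : Type*} (x : ι → ℝ) {S : Finset ι} (hS : #S ≤ k)
    {j : ι} (hj : ∀ i ∈ S, x i ≠ x j) {δ : ℝ} (hδ : 0 < δ) :
    ¬ (∑ i ∈ S, momentMatrix k (x i) - δ • momentMatrix k (x j)).PosSemidef := by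
  intro hpsd
  obtain ⟨c, hcS, hcj⟩ := exists_dotProduct_momentVector_eq_zero x hS hj
  have hnonneg := hpsd.dotProduct_mulVec_nonneg c
  simp only [star_trivial, sub_mulVec, sum_mulVec, smul_mulVec, dotProduct_sub, dotProduct_sum,
    dotProduct_smul, momentMatrix, dotProduct_vecMulVec_self_mulVec] at hnonneg
  rw [sum_eq_zero fun i hi => by rw [hcS i hi, zero_pow two_ne_zero]] at hnonneg
  rw [smul_eq_mul, zero_sub, neg_nonneg] at hnonneg
  exact (mul_pos hδ (sq_pos_of_ne_zero hcj)).not_ge hnonneg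

end Moment

section Ramsey

open Finset

variable {C : Type*}

def IsMonochromatic (f : Finset ℕ → C) (r : ℕ) (Y : Set ℕ) (c : C) : Prop :=
  ∀ s : Finset ℕ, ↑s ⊆ Y → #s = r → f s = c

lemma exists_strictMono_insert_monochromatic (f : Finset ℕ → C) (r : ℕ)
    (hr : ∀ (g : Finset ℕ → C) {X : Set ℕ}, X.Infinite →
      ∃ Y ⊆ X, Y.Infinite ∧ ∃ c, IsMonochromatic g r Y c)
    {X : Set ℕ} (hX : X.Infinite) :
    ∃ a : ℕ → ℕ, StrictMono a ∧ (∀ n, a n ∈ X) ∧ ∃ col : ℕ → C,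
      ∀ n, IsMonochromatic (fun s => f (insert (a n) s)) r (a '' Set.Ioi n) (col n) := by
  have step : ∀ Z : {Z : Set ℕ // Z.Infinite}, ∃ Y : {Y : Set ℕ // Y.Infinite},
      Y.1 ⊆ Z.1 \ Set.Iic (sInf Z.1) ∧
        ∃ c, IsMonochromatic (fun s => f (insert (sInf Z.1) s)) r Y.1 c := fun Z => by
    obtain ⟨Y, hYZ, hY, c, hc⟩ := hr _ (Z.2.sdiff (Set.finite_Iic (sInf Z.1)))
    exact ⟨⟨Y, hY⟩, hYZ, c, hc⟩
  choose next hnext col hcol using step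
  set Z : ℕ → {Z : Set ℕ // Z.Infinite} := fun n => next^[n] ⟨X, hX⟩
  have hZ_succ (n : ℕ) : Z (n + 1) = next (Z n) := Function.iterate_succ_apply' ..
  set a : ℕ → ℕ := fun n => sInf (Z n).1
  have ha_mem (n : ℕ) : a n ∈ (Z n).1 := Nat.sInf_mem (Z n).2.nonempty
  have hZ_anti : Antitone fun n => (Z n).1 := antitone_nat_of_succ_le fun n => by
    rw [hZ_succ]; exact (hnext _).trans Set.sdiff_subset
  have hZ_gt (n : ℕ) : ∀ y ∈ (Z (n + 1)).1, a n < y := fun y hy => by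
    rw [hZ_succ] at hy; simpa using ((hnext _) hy).2
  refine ⟨a, strictMono_nat_of_lt_succ fun n => hZ_gt n _ (ha_mem _),
    fun n => hZ_anti (Nat.zero_le n) (ha_mem n), fun n => col (Z n), fun n s hs => hcol (Z n) s ?_⟩
  rintro _ hx
  obtain ⟨l, hl, rfl⟩ := hs hx
  rw [← hZ_succ]
  exact hZ_anti hl (ha_mem l)

theorem exists_infinite_monochromatic [Finite C] (f : Finset ℕ → C) (r : ℕ) {X : Set ℕ}
    (hX : X.Infinite) : ∃ Y ⊆ X, Y.Infinite ∧ ∃ c, IsMonochromatic f r Y c := by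
  induction r generalizing f X with
  | zero => exact ⟨X, subset_rfl, hX, f ∅, fun s _ hs => by rw [card_eq_zero.1 hs]⟩
  | succ r ih =>
    obtain ⟨a, ha, haX, col, hcol⟩ :=
      exists_strictMono_insert_monochromatic f r (fun g _ hX => ih g hX) hX
    obtain ⟨c, hc⟩ := Finite.exists_infinite_fiber col
    refine ⟨a '' (col ⁻¹' {c}), Set.image_subset_iff.2 fun n _ => haX n,
      (Set.infinite_coe_iff.1 hc).image ha.injective.injOn, c, fun s hs hcard => ?_⟩
    have hne : s.Nonempty := card_pos.1 (by omega)
    obtain ⟨n, hn, hmin⟩ := hs (s.min'_mem hne)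
    have hrest : ↑(s.erase (s.min' hne)) ⊆ a '' Set.Ioi n := by
      intro x hx
      obtain ⟨l, -, rfl⟩ := hs (mem_of_mem_erase hx)
      exact ⟨l, ha.lt_iff_lt.1 (hmin ▸ min'_lt_of_mem_erase_min' _ _ hx), rfl⟩
    calc f s = f (insert (a n) (s.erase (s.min' hne))) := by
          rw [hmin, insert_erase (s.min'_mem hne)]
      _ = c := (hcol n _ hrest (by rw [card_erase_of_mem (s.min'_mem hne), hcard]; rfl)).trans hn

theorem exists_chain_of_forall_card_eq {ι : Type*} [Finite ι] (k : ℕ)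
    (P : ι → Finset ℕ → ℕ → Prop) (hP : ∀ i S S' t, S' ⊆ S → P i S t → P i S' t)
    (hcover : ∀ S t, #S = k → t ∉ S → ∃ i, P i S t) :
    ∃ i, ∃ e : ℕ → ℕ, ∀ j ≤ k, P i ((range j).image e) (e j) := by
  classical
  obtain ⟨Y, -, hY, c, hc⟩ := exists_infinite_monochromatic
    (fun T => {i | P i (T.erase (T.sup id)) (T.sup id)}) (k + 1) Set.infinite_univ
  set g := Nat.nth (· ∈ Y)
  have hg : StrictMono g := Nat.nth_strictMono hY
  have hgY (n : ℕ) : g n ∈ Y := Nat.nth_mem_of_infinite hY n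
  -- Starting at the `k`-th point of `Y` leaves room to pad `e '' [0, j)` to a `k`-subset of `Y`
  -- lying below `e j`.
  set e : ℕ → ℕ := fun l => g (k + l)
  have hpad : ∀ j ≤ k, ∃ S, (range j).image e ⊆ S ∧ #S = k ∧ ∀ s ∈ S, s ∈ Y ∧ s < e j := by
    intro j hj
    obtain ⟨S, hsub, hsup, hcard⟩ := exists_subsuperset_card_eq
      (s := (range j).image e) (t := (range (k + j)).image g)
      (image_subset_iff.2 fun l hl => mem_image_of_mem g (by simp at hl ⊢; omega))
      (card_image_le.trans (by simpa using hj))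
      (by rw [card_image_of_injective _ hg.injective, card_range]; omega)
    refine ⟨S, hsub, hcard, fun s hs => ?_⟩
    obtain ⟨l, hl, rfl⟩ := mem_image.1 (hsup hs)
    exact ⟨hgY l, hg (mem_range.1 hl)⟩
  have hc_eq : ∀ j S, #S = k → (∀ s ∈ S, s ∈ Y ∧ s < e j) → c = {i | P i S (e j)} := by
    intro j S hS hSY
    have hnot : e j ∉ S := fun h => (hSY _ h).2.false
    have hsup : (insert (e j) S).sup id = e j :=
      (Finset.sup_le (by simpa using fun s hs => (hSY s hs).2.le)).antisymm
        (le_sup (f := id) (mem_insert_self _ _))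
    have hTY : ↑(insert (e j) S) ⊆ Y := by
      simpa [Set.insert_subset_iff] using ⟨hgY _, fun s hs => (hSY s hs).1⟩
    have := hc (insert (e j) S) hTY (by rw [card_insert_of_notMem hnot, hS])
    simpa only [hsup, erase_insert hnot] using this.symm
  obtain ⟨S₀, -, hS₀, hS₀Y⟩ := hpad 0 (Nat.zero_le k)
  obtain ⟨i, hi⟩ := hcover S₀ (e 0) hS₀ fun h => (hS₀Y _ h).2.false
  refine ⟨i, e, fun j hj => ?_⟩
  obtain ⟨S, hsub, hS, hSY⟩ := hpad j hj
  have hic : i ∈ c := by rw [hc_eq 0 S₀ hS₀ hS₀Y]; exact hi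
  rw [hc_eq j S hS hSY] at hic
  exact hP i S _ _ hsub hic

end Ramsey

section Lift

open Finset Filter Topology

variable {ι : Type*} {E : ι → Type*} [∀ i, AddCommGroup (E i)] [∀ i, Module ℝ (E i)]
  {K : ∀ i, PointedCone ℝ (E i)} {k : ℕ}
  {π : (∀ i, E i) →ₗ[ℝ] Matrix (Fin (k + 1)) (Fin (k + 1)) ℝ} {L : Submodule ℝ (∀ i, E i)}

lemma exists_not_mem_minFace_sum [Finite ι]
    (himage : ∀ x ∈ L, (∀ i, x i ∈ K i) → (π x).PosSemidef) {u : ℕ → ∀ i, E i}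
    (hu : ∀ t, (∀ i, u t i ∈ K i) ∧ u t ∈ L ∧ π (u t) = momentMatrix k (t : ℝ))
    {S : Finset ℕ} (hS : #S ≤ k) {t : ℕ} (ht : t ∉ S) :
    ∃ i, u t i ∉ minFace (K i) (∑ s ∈ S, u s i) := by
  by_contra! h
  have hsum (i : ι) : ∑ s ∈ S, u s i ∈ K i := sum_mem fun s _ => (hu s).1 i
  obtain ⟨δ, hδK, hδ⟩ := ((eventually_all.2 fun i =>
    eventually_sub_smul_mem_of_mem_minFace (hsum i) (h i)).and self_mem_nhdsWithin).exists
  apply not_posSemidef_sum_momentMatrix_sub (fun s : ℕ => (s : ℝ)) hS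
    (fun s hs => Nat.cast_injective.ne (ne_of_mem_of_not_mem hs ht)) hδ
  have := himage (∑ s ∈ S, u s - δ • u t)
    (L.sub_mem (L.sum_mem fun s _ => (hu s).2.1) (L.smul_mem δ (hu t).2.1))
    (fun i => by simpa using hδK i)
  simpa [map_sub, map_sum, (hu _).2.2] using this

theorem exists_not_faceChainBound_of_posSemidef_eq_image [Finite ι]
    (hlift : {A : Matrix (Fin (k + 1)) (Fin (k + 1)) ℝ | A.PosSemidef} =
      π '' ({x | ∀ i, x i ∈ K i} ∩ L)) :
    ∃ i, ¬ FaceChainBound (K i : Set (E i)) (k + 1) := by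
  have hlift_mem (t : ℕ) : ∃ x, (∀ i, x i ∈ K i) ∧ x ∈ L ∧ π x = momentMatrix k (t : ℝ) := by
    obtain ⟨x, ⟨hxK, hxL⟩, hx⟩ := hlift.subset (posSemidef_momentMatrix (t : ℝ))
    exact ⟨x, hxK, hxL, hx⟩
  choose u hu using hlift_mem
  have himage (x) (hxL : x ∈ L) (hxK : ∀ i, x i ∈ K i) : (π x).PosSemidef :=
    hlift.superset ⟨x, ⟨hxK, hxL⟩, rfl⟩
  set F : ∀ i, Finset ℕ → Set (E i) := fun i S => minFace (K i) (∑ s ∈ S, u s i)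
  have hsum (i : ι) (S : Finset ℕ) : ∑ s ∈ S, u s i ∈ K i := sum_mem fun s _ => (hu s).1 i
  have hF_mono (i : ι) {S S' : Finset ℕ} (h : S' ⊆ S) : F i S' ⊆ F i S := by
    simp only [F, ← sum_sdiff h, add_comm _ (∑ s ∈ S', u s i)]
    exact minFace_subset_add (hsum i _)
  have hF_mem (i : ι) {S : Finset ℕ} {t : ℕ} (ht : t ∈ S) : u t i ∈ F i S := by
    simp only [F, ← add_sum_erase S _ ht]
    exact mem_minFace_add (hsum i _) ((hu t).1 i)
  obtain ⟨i, e, he⟩ := exists_chain_of_forall_card_eq k (fun i S t => u t i ∉ F i S)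
    (fun i _ _ _ h hS hS' => hS (hF_mono i h hS'))
    fun S t hS ht => exists_not_mem_minFace_sum himage hu hS.le ht
  refine ⟨i, not_faceChainBound_of_ssubset_succ (fun j => F i ((range j).image e))
    (fun j => ⟨isFace_minFace (hsum i _), _, self_mem_minFace (hsum i _)⟩)
    (fun a b hab => hF_mono i (image_subset_image (range_subset_range.2 hab))) fun j hj => ?_⟩
  have hsucc : (range (j + 1)).image e = insert (e j) ((range j).image e) := by
    rw [range_add_one, image_insert]
  refine (Set.ssubset_iff_of_subset (hF_mono i (hsucc ▸ subset_insert _ _))).2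
    ⟨u (e j) i, hF_mem i (hsucc ▸ mem_insert_self _ _), he j (Nat.lt_succ_iff.1 hj)⟩

end Lift

theorem statement_15_general (k : ℕ) (m : ℕ) (d : Fin m → ℕ)
    (K : ∀ i : Fin m, Set (EuclideanSpace ℝ (Fin (d i))))
    (hK : ∀ i, IsClosedConvexCone (K i))
    (hKl : ∀ i, FaceChainBound (K i) (k + 1)) :
    ¬ ∃ (π : (∀ i, EuclideanSpace ℝ (Fin (d i))) →ₗ[ℝ] Matrix (Fin (k + 1)) (Fin (k + 1)) ℝ)
        (L : Submodule ℝ (∀ i, EuclideanSpace ℝ (Fin (d i)))),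
        {A : Matrix (Fin (k + 1)) (Fin (k + 1)) ℝ | A.PosSemidef} =
          π '' ({x | ∀ i, x i ∈ K i} ∩ (L : Set (∀ i, EuclideanSpace ℝ (Fin (d i))))) := by
  rintro ⟨π, L, hlift⟩
  obtain ⟨i, hi⟩ := exists_not_faceChainBound_of_posSemidef_eq_image
    (K := fun i => (hK i).toPointedCone) hlift
  exact hi (hKl i)

/-- For every positive integer `k`, the cone `S₊^{k+1}` has no
`K₁ × ⋯ × Kₘ`-lift for any positive integer `m` and closed convex cones `K₁, …, Kₘ` with
`ℓ(Kᵢ) ≤ k + 1` for all `i`. -/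
theorem statement_15 (k : ℕ) (hk : 0 < k) (m : ℕ) (hm : 0 < m) (d : Fin m → ℕ)
    (K : ∀ i : Fin m, Set (EuclideanSpace ℝ (Fin (d i))))
    (hK : ∀ i, IsClosedConvexCone (K i))
    (hKl : ∀ i, FaceChainBound (K i) (k + 1)) :
    ¬ ∃ (π : (∀ i, EuclideanSpace ℝ (Fin (d i))) →ₗ[ℝ] Matrix (Fin (k + 1)) (Fin (k + 1)) ℝ)
        (L : Submodule ℝ (∀ i, EuclideanSpace ℝ (Fin (d i)))),
        {A : Matrix (Fin (k + 1)) (Fin (k + 1)) ℝ | A.PosSemidef} =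
          π '' ({x | ∀ i, x i ∈ K i} ∩ (L : Set (∀ i, EuclideanSpace ℝ (Fin (d i))))) :=
  statement_15_general k m d K hK hKl
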